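/- For every integer m ≥ 1 and every real t ≥ T, one has |τ_m(t) − t| ≤ Σ_{j=1}^{m} (t + j) / ∏_{c=1}^{j} φ(t+c). -/

import Mathlib

/-!
Since `log (1 + x) ≤ x`, one step of the recursion gives
`τ_{n+1}(t) - t ≤ τ_n(t+1) / φ(t+1)`, and unrolling this bounds `τ_m(t) - t` by the sum.
For the lower bound, `τ_n ≥ 0` on `[T, ∞)` makes the logarithm nonnegative, so `τ_m(t) ≥ t`
for `m ≥ 1`.
-/

open Filter

/-- `PhiNest s z n k` is the finite composition
`exp(s - n + exp(s - (n+1) + ⋯ + exp(s - (n+k) + z)⋯))`,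
i.e. `Φ_{n, n+k}(s, z)` in the paper's notation. -/
noncomputable def PhiNest (s z : ℂ) : ℕ → ℕ → ℂ
  | n, 0 => Complex.exp (s - (n : ℂ) + z)
  | n, k + 1 => Complex.exp (s - (n : ℂ) + PhiNest s z (n + 1) k)

/-- `PhiComp s z n m = Φ_{n,m}(s,z)`, the composition of
`z ↦ exp(s - j + z)` for `j = n, …, m` (for `n ≤ m`). -/
noncomputable def PhiComp (s z : ℂ) (n m : ℕ) : ℂ :=
  PhiNest s z n (m - n)

/-- `phiSeq m s = φ_m(s) = Φ_{1,m}(s,0) = exp(s-1+exp(s-2+⋯+exp(s-m)⋯))`. -/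
noncomputable def phiSeq (m : ℕ) (s : ℂ) : ℂ :=
  PhiComp s 0 1 m

/-- The correction terms `τ_n` built from a real function `f` (the restriction
of `φ` to the real line): `τ_0 = 0`, `τ_{n+1}(t) = t + log(1 + τ_n(t+1)/f(t+1))`. -/
noncomputable def tauSeq (f : ℝ → ℝ) : ℕ → ℝ → ℝ
  | 0 => fun _ => 0
  | n + 1 => fun t => t + Real.log (1 + tauSeq f n (t + 1) / f (t + 1))


open Finset

@[to_additive]
theorem Finset.prod_Icc_succ_eq_mul_prod_shift {M : Type*} [CommMonoid M] (g : ℕ → M)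
    {a b : ℕ} (hab : a ≤ b + 1) :
    ∏ j ∈ Icc a (b + 1), g j = g a * ∏ j ∈ Icc a b, g (j + 1) := by
  rw [← insert_Icc_add_one_left_eq_Icc hab, prod_insert (by simp), ← map_add_right_Icc,
    prod_map]
  rfl

noncomputable def tauBound (f : ℝ → ℝ) (n : ℕ) (t : ℝ) : ℝ :=
  ∑ j ∈ Icc 1 n, (t + j) / ∏ c ∈ Icc 1 j, f (t + c)

theorem tauBound_succ (f : ℝ → ℝ) (n : ℕ) (t : ℝ) :
    tauBound f (n + 1) t = (t + 1 + tauBound f n (t + 1)) / f (t + 1) := by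
  have hprod (j : ℕ) : ∏ c ∈ Icc 1 (j + 1), f (t + c)
      = f (t + 1) * ∏ c ∈ Icc 1 j, f (t + 1 + c) := by
    rw [prod_Icc_succ_eq_mul_prod_shift _ (by omega)]
    push_cast
    simp only [add_assoc, add_comm (1 : ℝ)]
  rw [tauBound, sum_Icc_succ_eq_add_sum_shift _ (by omega), tauBound, add_div (t + 1), sum_div]
  congr 1
  · simp
  · refine sum_congr rfl fun j _ ↦ ?_
    rw [hprod, div_mul_eq_div_div_swap]
    push_cast
    ring_nf

section

variable {f : ℝ → ℝ} {T : ℝ}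

theorem self_le_tauSeq_succ {n : ℕ} {t : ℝ} (hτ : 0 ≤ tauSeq f n (t + 1)) (hf : 0 < f (t + 1)) :
    t ≤ tauSeq f (n + 1) t :=
  le_add_of_nonneg_right <| Real.log_nonneg <| le_add_of_nonneg_right <| div_nonneg hτ hf.le

theorem tauSeq_nonneg (hT : 0 ≤ T) (hf : ∀ u, T ≤ u → 0 < f u) :
    ∀ n t, T ≤ t → 0 ≤ tauSeq f n t
  | 0, _, _ => le_rfl
  | n + 1, t, ht => (hT.trans ht).trans <|
      self_le_tauSeq_succ (tauSeq_nonneg hT hf n _ (by linarith)) (hf _ (by linarith))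

theorem tauSeq_sub_self_le_tauBound (hT : 0 ≤ T) (hf : ∀ u, T ≤ u → 0 < f u) :
    ∀ n t, T ≤ t → tauSeq f n t - t ≤ tauBound f n t
  | 0, t, ht => by simpa [tauSeq, tauBound] using hT.trans ht
  | n + 1, t, ht => by
    have ht' : T ≤ t + 1 := by linarith
    have hx : 0 ≤ tauSeq f n (t + 1) / f (t + 1) :=
      div_nonneg (tauSeq_nonneg hT hf n _ ht') (hf _ ht').le
    have ih : tauSeq f n (t + 1) ≤ t + 1 + tauBound f n (t + 1) := by
      linarith [tauSeq_sub_self_le_tauBound hT hf n _ ht']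
    calc tauSeq f (n + 1) t - t = Real.log (1 + tauSeq f n (t + 1) / f (t + 1)) := by
          simp [tauSeq]
      _ ≤ tauSeq f n (t + 1) / f (t + 1) := by
          linarith [Real.log_le_sub_one_of_pos (show 0 < 1 + tauSeq f n (t + 1) / f (t + 1) by
            linarith)]
      _ ≤ tauBound f (n + 1) t := by
          rw [tauBound_succ]
          gcongr
          exact (hf _ ht').le

end

theorem tauSeq_distance_from_identity_bound_general (φ : ℂ → ℂ)
    (T : ℝ) (hT : 0 ≤ T) (hT1 : ∀ t : ℝ, T ≤ t → 1 < (φ (t : ℂ)).re) :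
    ∀ m : ℕ, 1 ≤ m → ∀ t : ℝ, T ≤ t →
      |tauSeq (fun u : ℝ => (φ (u : ℂ)).re) m t - t|
      ≤ ∑ j ∈ Finset.Icc 1 m,
          (t + j) / ∏ c ∈ Finset.Icc 1 j, (φ ((t + c : ℝ) : ℂ)).re := by
  intro m hm t ht
  obtain ⟨n, rfl⟩ := Nat.exists_eq_add_of_le' hm
  have hf : ∀ u, T ≤ u → 0 < (φ (u : ℂ)).re := fun u hu ↦ one_pos.trans (hT1 u hu)
  have hτ := tauSeq_nonneg hT hf n (t + 1) (by linarith)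
  rw [abs_of_nonneg (sub_nonneg.2 (self_le_tauSeq_succ hτ (hf _ (by linarith))))]
  exact tauSeq_sub_self_le_tauBound hT hf (n + 1) t ht

theorem tauSeq_distance_from_identity_bound (φ : ℂ → ℂ)
    (hlim : ∀ K : Set ℂ, IsCompact K →
      TendstoUniformlyOn (fun m s => phiSeq m s) φ atTop K)
    (hfe : ∀ s : ℂ, Complex.exp (s + φ s) = φ (s + 1))
    (hreal : ∀ t : ℝ, (φ (t : ℂ)).im = 0)
    (hpos : ∀ t : ℝ, 0 < (φ (t : ℂ)).re)
    (hmono : StrictMono (fun t : ℝ => (φ (t : ℂ)).re))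
    (htop : Tendsto (fun t : ℝ => (φ (t : ℂ)).re) atTop atTop)
    (T : ℝ) (hT : 0 ≤ T) (hT1 : ∀ t : ℝ, T ≤ t → 1 < (φ (t : ℂ)).re) :
    ∀ m : ℕ, 1 ≤ m → ∀ t : ℝ, T ≤ t →
      |tauSeq (fun u : ℝ => (φ (u : ℂ)).re) m t - t|
      ≤ ∑ j ∈ Finset.Icc 1 m,
          (t + j) / ∏ c ∈ Finset.Icc 1 j, (φ ((t + c : ℝ) : ℂ)).re :=
  tauSeq_distance_from_identity_bound_general φ T hT hT1
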